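/- Let z be a complex number with |z| < 1. Define a sequence (u_n) by u_0 = 1, u_1 = −1/2, and for n ≥ 1, u_{n+1} = ((4n³ − 2n − 1)/(2(n+1)³)) u_n − ((n−2)(n−1)n/(n+1)³) u_{n-1}. Then F(−1/2, 1/2; 1; z²)² = ∑_{n=0}^∞ u_n z^{2n}. (Equivalently, the square of the complete elliptic integral of the second kind satisfies E(z)² = (π²/4) ∑_{n=0}^∞ u_n z^{2n}, since E(z) = (π/2) F(−1/2,1/2;1;z²).) -/

import Mathlib

open scoped Nat

/-- The Gaussian hypergeometric function `F(a,b;c;z)`. -/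
noncomputable def hyperF (a b c z : ℂ) : ℂ :=
  ∑' k : ℕ, ((ascPochhammer ℂ k).eval a * (ascPochhammer ℂ k).eval b /
    ((ascPochhammer ℂ k).eval c * (k ! : ℂ))) * z ^ k

/-- Taylor coefficients of `F(-1/2,1/2;1;w)`. -/
noncomputable def aa : ℕ → ℝ
  | 0 => 1
  | (k+1) => (4 * (k : ℝ) ^ 2 - 1) / (4 * ((k : ℝ) + 1) ^ 2) * aa k

lemma aa_zero : aa 0 = 1 := rfl

lemma aa_succ (k : ℕ) :
    aa (k + 1) = (4 * (k : ℝ) ^ 2 - 1) / (4 * ((k : ℝ) + 1) ^ 2) * aa k := rfl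

lemma aa_abs_le (k : ℕ) : |aa k| ≤ 1 := by
  induction k with
  | zero => simp [aa_zero]
  | succ k ih =>
    rw [aa_succ, abs_mul, abs_div]
    have h2 : (0 : ℝ) < 4 * ((k : ℝ) + 1) ^ 2 := by positivity
    have h1 : |4 * (k : ℝ) ^ 2 - 1| ≤ 4 * ((k : ℝ) + 1) ^ 2 := by
      rw [abs_le]
      constructor <;> nlinarith [sq_nonneg ((k : ℝ)), Nat.cast_nonneg (α := ℝ) k]
    calc |4 * (k : ℝ) ^ 2 - 1| / |4 * ((k : ℝ) + 1) ^ 2| * |aa k| ≤ 1 * 1 := by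
          apply mul_le_mul _ ih (abs_nonneg _) zero_le_one
          rw [abs_of_pos h2, div_le_one h2]
          exact h1
      _ = 1 := by norm_num

lemma aa_mul_succ (k : ℕ) :
    4 * ((k : ℝ) + 1) ^ 2 * aa (k + 1) = (4 * (k : ℝ) ^ 2 - 1) * aa k := by
  rw [aa_succ]
  have h : 4 * ((k : ℝ) + 1) ^ 2 ≠ 0 := by positivity
  field_simp

lemma hcoeff' (k : ℕ) :
    (ascPochhammer ℂ k).eval (-(1 / 2)) * (ascPochhammer ℂ k).eval (1 / 2)
      = ((aa k : ℝ) : ℂ) * ((k ! : ℂ) * (k ! : ℂ)) := by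
  induction k with
  | zero => simp [aa_zero]
  | succ k ih =>
    have hC : 4 * ((k : ℂ) + 1) ^ 2 * ((aa (k + 1) : ℝ) : ℂ)
        = (4 * (k : ℂ) ^ 2 - 1) * ((aa k : ℝ) : ℂ) := by
      have := aa_mul_succ k
      have h2 := congrArg (fun x : ℝ => (x : ℂ)) this
      push_cast at h2 ⊢
      exact_mod_cast h2
    rw [ascPochhammer_succ_eval, ascPochhammer_succ_eval]
    push_cast [Nat.factorial_succ]
    linear_combination ((k : ℂ) ^ 2 - 1 / 4) * ih - ((1 / 4) * ((k ! : ℕ) : ℂ) ^ 2) * hC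

lemma hcoeff (k : ℕ) :
    (ascPochhammer ℂ k).eval (-(1 / 2)) * (ascPochhammer ℂ k).eval (1 / 2) /
      ((ascPochhammer ℂ k).eval 1 * (k ! : ℂ)) = ((aa k : ℝ) : ℂ) := by
  have hfac : ((k ! : ℕ) : ℂ) ≠ 0 := Nat.cast_ne_zero.mpr (Nat.factorial_ne_zero k)
  rw [ascPochhammer_eval_one, div_eq_iff (mul_ne_zero hfac hfac)]
  exact hcoeff' k

lemma summable_aa (w : ℂ) (hw : ‖w‖ < 1) :
    Summable fun k : ℕ => ‖((aa k : ℝ) : ℂ) * w ^ k‖ := by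
  apply Summable.of_nonneg_of_le (fun k => norm_nonneg _) (fun k => ?_)
    (summable_geometric_of_lt_one (norm_nonneg w) hw)
  rw [norm_mul, norm_pow]
  calc ‖((aa k : ℝ) : ℂ)‖ * ‖w‖ ^ k ≤ 1 * ‖w‖ ^ k := by
        apply mul_le_mul_of_nonneg_right _ (by positivity)
        rw [Complex.norm_real, Real.norm_eq_abs]
        exact aa_abs_le k
    _ = ‖w‖ ^ k := by rw [one_mul]

/-- Cauchy-product coefficients. -/
noncomputable def cc (n : ℕ) : ℝ := ∑ k ∈ Finset.range (n + 1), aa k * aa (n - k)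

/-- Numerator of the WZ certificate. -/
noncomputable def numer (n k : ℝ) : ℝ :=
  k ^ 2 / 2 + k ^ 3 - 2 * k ^ 4 - 4 * k ^ 5
    + n * (-(7 / 2) * k ^ 2 + 8 * k ^ 3 + 22 * k ^ 4 - 16 * k ^ 5)
    + n ^ 2 * (-6 * k ^ 2 - 32 * k ^ 3 + 48 * k ^ 4)
    + n ^ 3 * (14 * k ^ 2 - 48 * k ^ 3)
    + n ^ 4 * (16 * k ^ 2)

/-- The WZ certificate. -/
noncomputable def gg (n k : ℕ) : ℝ :=
  numer n k / ((4 * ((n : ℝ) - k) ^ 2 - 1) * (((n : ℝ) - k) + 1) ^ 2) * aa k * aa (n - k)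

/-- The summand of the recurrence combination. -/
noncomputable def tt (n k : ℕ) : ℝ :=
  2 * ((n : ℝ) + 1) ^ 3 * (aa k * aa (n + 1 - k))
    - (4 * (n : ℝ) ^ 3 - 2 * (n : ℝ) - 1) * (aa k * aa (n - k))
    + 2 * ((n : ℝ) - 2) * ((n : ℝ) - 1) * (n : ℝ) * (aa k * aa (n - 1 - k))

lemma four_sq_sub_one_ne (j : ℕ) : 4 * (j : ℝ) ^ 2 - 1 ≠ 0 := by
  rcases Nat.eq_zero_or_pos j with h | h
  · subst h; norm_num
  · have : (1 : ℝ) ≤ (j : ℝ) := by exact_mod_cast h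
    nlinarith

lemma tt_eq (n k : ℕ) (hk : k + 1 ≤ n) : tt n k = gg n (k + 1) - gg n k := by
  obtain ⟨j, rfl⟩ : ∃ j, n = k + 1 + j := ⟨n - (k + 1), by omega⟩
  have e1 : k + 1 + j + 1 - k = j + 2 := by omega
  have e2 : k + 1 + j - k = j + 1 := by omega
  have e3 : k + 1 + j - 1 - k = j := by omega
  have e4 : k + 1 + j - (k + 1) = j := by omega
  rw [tt, gg, gg, e1, e2, e3, e4, aa_succ (j + 1), aa_succ j, aa_succ k]
  push_cast
  have ej : (k : ℝ) + 1 + (j : ℝ) - ((k : ℝ) + 1) = (j : ℝ) := by ring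
  have e5 : (k : ℝ) + 1 + (j : ℝ) - (k : ℝ) = (j : ℝ) + 1 := by ring
  rw [ej, e5]
  have h1 : 4 * (j : ℝ) ^ 2 - 1 ≠ 0 := four_sq_sub_one_ne j
  have h2 : 4 * ((j : ℝ) + 1) ^ 2 - 1 ≠ 0 := by
    have := four_sq_sub_one_ne (j + 1); push_cast at this; exact this
  have h3 : ((j : ℝ) + 1) ≠ 0 := by positivity
  have h4 : ((j : ℝ) + 2) ≠ 0 := by positivity
  have h5 : ((k : ℝ) + 1) ≠ 0 := by positivity
  have h6 : ((j : ℝ) + 1 + 1) ≠ 0 := by positivity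
  rw [numer, numer]
  have h1' : (j : ℝ) ^ 2 * 4 - 1 ≠ 0 := by rw [mul_comm]; exact h1
  field_simp
  ring

lemma aa_one : aa 1 = -(1 / 4) := by
  have h := aa_succ 0
  norm_num [aa_zero] at h
  simpa using h

lemma gg_zero (n : ℕ) : gg n 0 = 0 := by
  simp [gg, numer]

lemma sum_tt (n : ℕ) : ∀ m, m ≤ n → ∑ k ∈ Finset.range m, tt n k = gg n m := by
  intro m
  induction m with
  | zero => intro _; simp [gg_zero]
  | succ m ih =>
    intro hm
    rw [Finset.sum_range_succ, ih (by omega), tt_eq n m hm]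
    ring

lemma boundary (n : ℕ) :
    gg n n = (4 * (n : ℝ) ^ 3 - 2 * (n : ℝ) - 1) * (aa n * aa 0)
      - 2 * ((n : ℝ) + 1) ^ 3 * (aa n * aa 1 + aa (n + 1) * aa 0) := by
  have h5 : ((n : ℝ) + 1) ≠ 0 := by positivity
  rw [gg, Nat.sub_self, sub_self, aa_zero, aa_one, aa_succ n, numer]
  field_simp
  ring

lemma cc_rec_mul (n : ℕ) (hn : 1 ≤ n) :
    2 * ((n : ℝ) + 1) ^ 3 * cc (n + 1)
      = (4 * (n : ℝ) ^ 3 - 2 * (n : ℝ) - 1) * cc n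
        - 2 * ((n : ℝ) - 2) * ((n : ℝ) - 1) * (n : ℝ) * cc (n - 1) := by
  have h1 : n - 1 + 1 = n := by omega
  have hsum := sum_tt n n le_rfl
  have hsplit : ∑ k ∈ Finset.range n, tt n k
      = 2 * ((n : ℝ) + 1) ^ 3 * (∑ k ∈ Finset.range n, aa k * aa (n + 1 - k))
        - (4 * (n : ℝ) ^ 3 - 2 * (n : ℝ) - 1) * (∑ k ∈ Finset.range n, aa k * aa (n - k))
        + 2 * ((n : ℝ) - 2) * ((n : ℝ) - 1) * (n : ℝ) * (∑ k ∈ Finset.range n, aa k * aa (n - 1 - k)) := by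
    rw [Finset.mul_sum, Finset.mul_sum, Finset.mul_sum, ← Finset.sum_sub_distrib,
      ← Finset.sum_add_distrib]
    exact Finset.sum_congr rfl fun k _ => rfl
  rw [cc, cc, cc, h1]
  rw [Finset.sum_range_succ, Finset.sum_range_succ, Finset.sum_range_succ]
  simp only [Nat.sub_self, Nat.add_sub_cancel_left, Nat.add_sub_cancel]
  linear_combination hsum - hsplit + boundary n

lemma cc_rec (n : ℕ) (hn : 1 ≤ n) :
    cc (n + 1) = ((4 * (n : ℝ) ^ 3 - 2 * (n : ℝ) - 1) / (2 * ((n : ℝ) + 1) ^ 3)) * cc n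
      - (((n : ℝ) - 2) * ((n : ℝ) - 1) * (n : ℝ) / ((n : ℝ) + 1) ^ 3) * cc (n - 1) := by
  have h : ((n : ℝ) + 1) ≠ 0 := by positivity
  have hm := cc_rec_mul n hn
  field_simp
  linear_combination hm

theorem squared_elliptic_E_recurrence
    (z : ℂ) (hz : ‖z‖ < 1)
    (u : ℕ → ℝ)
    (hu0 : u 0 = 1)
    (hu1 : u 1 = -(1 / 2))
    (hrec : ∀ n : ℕ, 1 ≤ n →
      u (n + 1) =
        ((4 * (n : ℝ) ^ 3 - 2 * (n : ℝ) - 1) / (2 * ((n : ℝ) + 1) ^ 3)) * u n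
        - (((n : ℝ) - 2) * ((n : ℝ) - 1) * (n : ℝ) / ((n : ℝ) + 1) ^ 3) * u (n - 1)) :
    (hyperF (-(1 / 2)) (1 / 2) 1 (z ^ 2)) ^ 2 = ∑' n : ℕ, (u n : ℂ) * z ^ (2 * n) := by
  have hu : ∀ n, u n = cc n := by
    intro n
    induction n using Nat.strong_induction_on with
    | _ n ih =>
      match n with
      | 0 => rw [hu0]; simp [cc, aa_zero]
      | 1 =>
        rw [hu1, cc]
        norm_num [Finset.sum_range_succ, aa_zero, aa_one]
      | (m + 2) =>
        have h1 : m + 1 - 1 = m := by omega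
        rw [hrec (m + 1) (by omega), cc_rec (m + 1) (by omega), h1,
          ih (m + 1) (by omega), ih m (by omega)]
  have hw : ‖z ^ 2‖ < 1 := by
    rw [norm_pow]
    exact pow_lt_one₀ (norm_nonneg z) hz (by norm_num)
  have hs := summable_aa (z ^ 2) hw
  have hF : hyperF (-(1 / 2)) (1 / 2) 1 (z ^ 2) = ∑' k : ℕ, ((aa k : ℝ) : ℂ) * (z ^ 2) ^ k :=
    tsum_congr fun k => by rw [hcoeff]
  rw [hF, sq, tsum_mul_tsum_eq_tsum_sum_range_of_summable_norm hs hs]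
  apply tsum_congr
  intro n
  rw [hu n]
  have hcast : ((cc n : ℝ) : ℂ) = ∑ k ∈ Finset.range (n + 1), ((aa k : ℝ) : ℂ) * ((aa (n - k) : ℝ) : ℂ) := by
    rw [cc]; push_cast; rfl
  rw [hcast, Finset.sum_mul]
  apply Finset.sum_congr rfl
  intro k hk
  have hk' : k ≤ n := Finset.mem_range_succ_iff.mp hk
  have hzz : (z ^ 2) ^ k * (z ^ 2) ^ (n - k) = z ^ (2 * n) := by
    rw [← pow_add, ← pow_mul]
    congr 1
    omega
  calc ((aa k : ℝ) : ℂ) * (z ^ 2) ^ k * (((aa (n - k) : ℝ) : ℂ) * (z ^ 2) ^ (n - k))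
      = ((aa k : ℝ) : ℂ) * ((aa (n - k) : ℝ) : ℂ) * ((z ^ 2) ^ k * (z ^ 2) ^ (n - k)) := by ring
    _ = ((aa k : ℝ) : ℂ) * ((aa (n - k) : ℝ) : ℂ) * z ^ (2 * n) := by rw [hzz]
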